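/- arXiv:2201.10081 — 3 statements merged into one kernel-verified Lean document; each statement's English description precedes it below -/
import Mathlib

section
/- The EPIC canonicalization is invariant to potential shaping: if R'(s,a,s') = R(s,a,s') + γΦ(s') − Φ(s) for a bounded potential Φ, then C(R') = C(R), where C(R)(s,a,s') = R(s,a,s') + E[γR(s',A,S') − R(s,A,S') − γR(S,A,S')] with S, A, S' independent random variables over states and actions. -/
/-!
`epicC` is additive on rewards whose iterated integrals exist, and the shaped reward is `R` plus
the shaping term `γ Φ(s') - Φ(s)`, which `epicC` sends to zero: writing `I = E[Φ(S)]`, its four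
summands are `γ Φ(s') - Φ(s)`, `γ² I - γ Φ(s')`, `Φ(s) - γ I` and `γ I - γ² I`.
-/

open MeasureTheory

/-- The EPIC canonicalization of a reward function. -/
noncomputable def epicC {S A : Type*} [MeasurableSpace S] [MeasurableSpace A]
    (μS : Measure S) (μA : Measure A) (γ : ℝ) (R : S → A → S → ℝ) : S → A → S → ℝ :=
  fun s _a s' =>
    R s _a s' + (∫ a', (∫ x', γ * R s' a' x' ∂μS) ∂μA)
      - (∫ a', (∫ x', R s a' x' ∂μS) ∂μA)
      - γ * (∫ x, (∫ a', (∫ x', R x a' x' ∂μS) ∂μA) ∂μS)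

section

variable {S A : Type*} [MeasurableSpace S] [MeasurableSpace A] {μS : Measure S} {μA : Measure A}

/-- The integrability conditions under which the iterated integrals in `epicC μS μA γ R` are
genuine values rather than the junk value `0`, at every state. -/
def IntegrableReward (μS : Measure S) (μA : Measure A) (R : S → A → S → ℝ) : Prop :=
  (∀ s, Integrable (Function.uncurry (R s)) (μA.prod μS)) ∧
    Integrable (fun x => ∫ a', ∫ x', R x a' x' ∂μS ∂μA) μS

theorem integrableReward_of_bounded [IsFiniteMeasure μS] [IsFiniteMeasure μA]
    {R : S → A → S → ℝ} (hm : Measurable fun p : S × A × S => R p.1 p.2.1 p.2.2) {M : ℝ}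
    (hb : ∀ s a s', |R s a s'| ≤ M) : IntegrableReward μS μA R := by
  have hb' (s : S) (a : A) (s' : S) : ‖R s a s'‖ ≤ M := (Real.norm_eq_abs _).trans_le (hb s a s')
  have hinner_bound (s : S) (a : A) : ‖∫ x', R s a x' ∂μS‖ ≤ M * μS.real .univ :=
    norm_integral_le_of_norm_le_const (ae_of_all _ (hb' s a))
  have hmeas : StronglyMeasurable fun x => ∫ a', ∫ x', R x a' x' ∂μS ∂μA := by
    have hm' : Measurable fun q : (S × A) × S => R q.1.1 q.1.2 q.2 := by fun_prop
    exact hm'.stronglyMeasurable.integral_prod_right'.integral_prod_right'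
  refine ⟨fun s => .of_bound ?_ M (ae_of_all _ fun p => hb' s p.1 p.2),
    .of_bound hmeas.aestronglyMeasurable _
      (ae_of_all _ fun x => norm_integral_le_of_norm_le_const (ae_of_all _ (hinner_bound x)))⟩
  exact (hm.comp (measurable_const.prodMk measurable_id)).aestronglyMeasurable

theorem epicC_add [SFinite μS] [SFinite μA] {R₁ R₂ : S → A → S → ℝ}
    (h₁ : IntegrableReward μS μA R₁) (h₂ : IntegrableReward μS μA R₂) (γ : ℝ) :
    epicC μS μA γ (R₁ + R₂) = epicC μS μA γ R₁ + epicC μS μA γ R₂ := by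
  funext s a s'
  have hmean (x : S) : ∫ a', ∫ x', R₁ x a' x' + R₂ x a' x' ∂μS ∂μA
      = (∫ a', ∫ x', R₁ x a' x' ∂μS ∂μA) + ∫ a', ∫ x', R₂ x a' x' ∂μS ∂μA :=
    integral_integral_add (h₁.1 x) (h₂.1 x)
  have hγmean : ∫ a', ∫ x', γ * (R₁ s' a' x' + R₂ s' a' x') ∂μS ∂μA
      = (∫ a', ∫ x', γ * R₁ s' a' x' ∂μS ∂μA) + ∫ a', ∫ x', γ * R₂ s' a' x' ∂μS ∂μA := by
    simp only [mul_add]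
    exact integral_integral_add ((h₁.1 s').const_mul γ) ((h₂.1 s').const_mul γ)
  simp only [epicC, Pi.add_apply, hγmean, hmean, integral_add h₁.2 h₂.2]
  ring

def potentialShaping (γ : ℝ) (Φ : S → ℝ) : S → A → S → ℝ := fun s _ s' => γ * Φ s' - Φ s

variable [IsProbabilityMeasure μS] [IsProbabilityMeasure μA]

theorem integral_integral_potentialShaping {Φ : S → ℝ} (hΦ : Integrable Φ μS) (γ : ℝ) (s : S) :
    ∫ a', ∫ x', potentialShaping (A := A) γ Φ s a' x' ∂μS ∂μA = γ * ∫ x, Φ x ∂μS - Φ s := by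
  simp [potentialShaping, integral_sub (hΦ.const_mul γ) (integrable_const _), integral_const_mul]

theorem integrableReward_potentialShaping {Φ : S → ℝ} (hΦ : Integrable Φ μS) (γ : ℝ) :
    IntegrableReward μS μA (potentialShaping γ Φ) := by
  refine ⟨fun s => ((hΦ.comp_snd μA).const_mul γ).sub (integrable_const _), ?_⟩
  simp only [integral_integral_potentialShaping hΦ]
  exact (integrable_const _).sub hΦ

theorem epicC_potentialShaping {Φ : S → ℝ} (hΦ : Integrable Φ μS) (γ : ℝ) :
    epicC μS μA γ (potentialShaping γ Φ) = 0 := by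
  funext s a s'
  simp only [epicC, integral_const_mul, integral_integral_potentialShaping hΦ,
    integral_sub (integrable_const _) hΦ]
  simp only [potentialShaping, integral_const, probReal_univ, smul_eq_mul, one_mul, Pi.zero_apply]
  ring

end

theorem epic_invariant_to_shaping_general {S A : Type*} [MeasurableSpace S] [MeasurableSpace A]
    (μS : Measure S) (μA : Measure A)
    [IsProbabilityMeasure μS] [IsProbabilityMeasure μA]
    (γ : ℝ)
    (R : S → A → S → ℝ)
    (hRm : Measurable fun p : S × A × S => R p.1 p.2.1 p.2.2)
    (hRb : ∃ M, ∀ s a s', |R s a s'| ≤ M)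
    (Φ : S → ℝ) (hΦm : Measurable Φ) (hΦb : ∃ M, ∀ s, |Φ s| ≤ M)
    (R' : S → A → S → ℝ)
    (hR' : ∀ s a s', R' s a s' = R s a s' + γ * Φ s' - Φ s) :
    epicC μS μA γ R' = epicC μS μA γ R := by
  obtain ⟨M, hM⟩ := hRb
  obtain ⟨N, hN⟩ := hΦb
  have hΦ : Integrable Φ μS :=
    .of_bound hΦm.aestronglyMeasurable N
      (ae_of_all _ fun s => (Real.norm_eq_abs _).trans_le (hN s))
  have hshaped : R' = R + potentialShaping γ Φ := by
    funext s a s'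
    rw [hR', add_sub_assoc]
    rfl
  rw [hshaped, epicC_add (integrableReward_of_bounded hRm hM)
    (integrableReward_potentialShaping hΦ γ), epicC_potentialShaping hΦ, add_zero]

/-- The EPIC canonicalization is invariant to potential shaping. -/
theorem epic_invariant_to_shaping {S A : Type*} [MeasurableSpace S] [MeasurableSpace A]
    (μS : Measure S) (μA : Measure A)
    [IsProbabilityMeasure μS] [IsProbabilityMeasure μA]
    (γ : ℝ) (hγ : γ ∈ Set.Icc (0 : ℝ) 1)
    (R : S → A → S → ℝ)
    (hRm : Measurable fun p : S × A × S => R p.1 p.2.1 p.2.2)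
    (hRb : ∃ M, ∀ s a s', |R s a s'| ≤ M)
    (Φ : S → ℝ) (hΦm : Measurable Φ) (hΦb : ∃ M, ∀ s, |Φ s| ≤ M)
    (R' : S → A → S → ℝ)
    (hR' : ∀ s a s', R' s a s' = R s a s' + γ * Φ s' - Φ s) :
    epicC μS μA γ R' = epicC μS μA γ R :=
  epic_invariant_to_shaping_general μS μA γ R hRm hRb Φ hΦm hΦb R' hR'
end

section
/- Potential shaping preserves optimal policies: in a Markov decision process with discount γ ∈ [0,1), if R'(s,a,s') = R(s,a,s') + γΦ(s') − Φ(s) for a bounded Φ : S → ℝ, then the optimal state-action value functions satisfy Q'*(s,a) = Q*(s,a) − Φ(s), and hence the set of optimal policies under R' equals the set under R. -/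
open MeasureTheory

lemma sup_abs_sub_le_aux {A : Type*} [Fintype A] [Nonempty A] (f g : A → ℝ) (K : ℝ)
    (h : ∀ a, |f a - g a| ≤ K) : |(⨆ a, f a) - ⨆ a, g a| ≤ K := by
  rw [abs_sub_le_iff]
  constructor
  · rw [sub_le_iff_le_add]
    exact ciSup_le fun a => by
      have := (abs_le.1 (h a)).2
      have := le_ciSup (Finite.bddAbove_range g) a
      linarith
  · rw [sub_le_iff_le_add]
    exact ciSup_le fun a => by
      have := (abs_le.1 (h a)).1
      have := le_ciSup (Finite.bddAbove_range f) a
      linarith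

/-- Potential shaping preserves optimal policies. In an MDP with finite
state and action spaces and discount γ ∈ [0,1), if Q and Q' are the (unique bounded)
solutions of the Bellman optimality equations for R and for the shaped reward
R'(s,a,s') = R(s,a,s') + γΦ(s') − Φ(s), then Q'(s,a) = Q(s,a) − Φ(s), and a
deterministic policy is optimal under R' iff it is optimal under R. -/
theorem shaping_preserves_optimal_policies {S A : Type*}
    [Fintype S] [Fintype A] [Nonempty A] [MeasurableSpace S] [MeasurableSingletonClass S]
    (T : S → A → Measure S) (hT : ∀ s a, IsProbabilityMeasure (T s a))
    (γ : ℝ) (hγ0 : 0 ≤ γ) (hγ1 : γ < 1)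
    (R : S → A → S → ℝ) (hRb : ∃ M, ∀ s a s', |R s a s'| ≤ M)
    (Φ : S → ℝ) (hΦb : ∃ M, ∀ s, |Φ s| ≤ M)
    (R' : S → A → S → ℝ)
    (hR' : ∀ s a s', R' s a s' = R s a s' + γ * Φ s' - Φ s)
    (Q Q' : S → A → ℝ)
    (hQ : ∀ s a, Q s a = ∫ s', (R s a s' + γ * ⨆ a', Q s' a') ∂(T s a))
    (hQ' : ∀ s a, Q' s a = ∫ s', (R' s a s' + γ * ⨆ a', Q' s' a') ∂(T s a)) :
    (∀ s a, Q' s a = Q s a - Φ s) ∧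
      (∀ π : S → A, (∀ s a, Q' s a ≤ Q' s (π s)) ↔ (∀ s a, Q s a ≤ Q s (π s))) := by
  have hmain : ∀ s a, Q' s a = Q s a - Φ s := by
    rcases isEmpty_or_nonempty S with hS | hS
    · exact fun s => (IsEmpty.false s).elim
    -- sup norm of the difference
    set D : S × A → ℝ := fun p => |Q' p.1 p.2 - Q p.1 p.2 + Φ p.1| with hD
    set K : ℝ := Finset.univ.sup' Finset.univ_nonempty D with hKdef
    have hKb : ∀ s a, |Q' s a - Q s a + Φ s| ≤ K := fun s a =>
      Finset.le_sup' D (Finset.mem_univ (s, a))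
    have hint : ∀ s a (f : S → ℝ), Integrable f (T s a) := by
      intro s a f
      have := hT s a
      exact .of_finite
    have hg : ∀ s', |(Φ s' + ⨆ a', Q' s' a') - ⨆ a', Q s' a'| ≤ K := by
      intro s'
      have h1 : Φ s' + (⨆ a', Q' s' a') = ⨆ a', (Q' s' a' + Φ s') := by
        rw [add_comm (Φ s'), ciSup_add (Finite.bddAbove_range _)]
      rw [h1]
      exact sup_abs_sub_le_aux _ _ K fun a => by
        have := hKb s' a
        have h2 : Q' s' a + Φ s' - Q s' a = Q' s' a - Q s' a + Φ s' := by ring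
        rwa [h2]
    have hstep : ∀ s a, |Q' s a - Q s a + Φ s| ≤ γ * K := by
      intro s a
      have := hT s a
      have e1 : Q' s a - Q s a + Φ s
          = ∫ s', γ * ((Φ s' + ⨆ a', Q' s' a') - ⨆ a', Q s' a') ∂(T s a) := by
        have hc : Φ s = ∫ _s', Φ s ∂(T s a) := by
          simp [integral_const]
        rw [hQ s a, hQ' s a]
        conv_lhs => rw [hc]
        rw [← integral_sub (hint s a _) (hint s a _), ← integral_add (hint s a _) (hint s a _)]
        exact integral_congr_ae (Filter.Eventually.of_forall fun s' => by
          simp only [hR']; ring)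
      rw [e1, integral_const_mul, abs_mul, abs_of_nonneg hγ0]
      refine mul_le_mul_of_nonneg_left ?_ hγ0
      calc |∫ s', ((Φ s' + ⨆ a', Q' s' a') - ⨆ a', Q s' a') ∂(T s a)|
          ≤ ∫ s', |(Φ s' + ⨆ a', Q' s' a') - ⨆ a', Q s' a'| ∂(T s a) :=
            by simpa only [Real.norm_eq_abs] using norm_integral_le_integral_norm (μ := T s a) (fun s' => (Φ s' + ⨆ a', Q' s' a') - ⨆ a', Q s' a')
        _ ≤ ∫ _s', K ∂(T s a) :=
            integral_mono (hint s a _) (hint s a _) hg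
        _ = K := by simp [integral_const]
    have hKle : K ≤ γ * K := by
      rw [hKdef]
      exact Finset.sup'_le _ _ fun p _ => hstep p.1 p.2
    have hK0 : 0 ≤ K := le_trans (abs_nonneg _) (hKb (Classical.arbitrary S) (Classical.arbitrary A))
    have hKzero : K ≤ 0 := by nlinarith
    intro s a
    have := hKb s a
    have : |Q' s a - Q s a + Φ s| ≤ 0 := le_trans this hKzero
    have := abs_nonpos_iff.1 this
    linarith
  refine ⟨hmain, fun π => ?_⟩
  constructor <;> intro h s a <;> have := h s a <;> rw [hmain, hmain] at * <;> linarith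
end

section
/- Potential shaping shifts trajectory returns by a trajectory-independent amount determined by the first state: for any infinite trajectory (s₀,a₀,s₁,a₁,...) and γ ∈ [0,1), the discounted return under R'(s,a,s') = R(s,a,s') + γΦ(s') − Φ(s) equals the return under R minus Φ(s₀); i.e., Σ_{t≥0} γ^t R'(s_t,a_t,s_{t+1}) = Σ_{t≥0} γ^t R(s_t,a_t,s_{t+1}) − Φ(s₀). -/
/-! The shaping term `γ Φ(sₜ₊₁) − Φ(sₜ)`, discounted by `γᵗ`, is the difference `gₜ₊₁ − gₜ` of
the summable sequence `gₜ = γᵗ Φ(sₜ)`, so its discounted sum telescopes to `−g₀ = −Φ(s₀)`. -/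

theorem summable_pow_mul_of_abs_le {γ : ℝ} (hγ : |γ| < 1) {x : ℕ → ℝ} {M : ℝ}
    (hx : ∀ t, |x t| ≤ M) : Summable fun t ↦ γ ^ t * x t := by
  refine ((summable_geometric_of_abs_lt_one hγ).abs.mul_right M).of_norm_bounded fun t ↦ ?_
  rw [Real.norm_eq_abs, abs_mul, abs_pow]
  exact mul_le_mul_of_nonneg_left (hx t) (pow_nonneg (abs_nonneg γ) t)

theorem Summable.tsum_succ_sub {G : Type*} [AddCommGroup G] [TopologicalSpace G]
    [IsTopologicalAddGroup G] [T2Space G] {g : ℕ → G} (hg : Summable g) :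
    ∑' t, (g (t + 1) - g t) = -g 0 := by
  rw [((summable_nat_add_iff 1).2 hg).tsum_sub hg, hg.tsum_eq_zero_add]
  abel

theorem tsum_pow_mul_shaped {γ : ℝ} {r φ : ℕ → ℝ} (hr : Summable fun t ↦ γ ^ t * r t)
    (hφ : Summable fun t ↦ γ ^ t * φ t) :
    ∑' t, γ ^ t * (r t + γ * φ (t + 1) - φ t) = ∑' t, γ ^ t * r t - φ 0 := by
  have hsplit : ∀ t, γ ^ t * (r t + γ * φ (t + 1) - φ t)
      = γ ^ t * r t + (γ ^ (t + 1) * φ (t + 1) - γ ^ t * φ t) := fun t ↦ by ring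
  rw [tsum_congr hsplit, hr.tsum_add (((summable_nat_add_iff 1).2 hφ).sub hφ), hφ.tsum_succ_sub,
    pow_zero, one_mul, sub_eq_add_neg]

/-- Potential shaping shifts trajectory returns by Φ(s₀): for any
infinite trajectory (s₀,a₀,s₁,a₁,...) and γ ∈ [0,1), the discounted return under
R'(s,a,s') = R(s,a,s') + γΦ(s') − Φ(s) equals the return under R minus Φ(s₀). -/
theorem shaping_shifts_returns {S A : Type*}
    (γ : ℝ) (hγ0 : 0 ≤ γ) (hγ1 : γ < 1)
    (R : S → A → S → ℝ) (hRb : ∃ M, ∀ s a s', |R s a s'| ≤ M)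
    (Φ : S → ℝ) (hΦb : ∃ M, ∀ s, |Φ s| ≤ M)
    (R' : S → A → S → ℝ)
    (hR' : ∀ s a s', R' s a s' = R s a s' + γ * Φ s' - Φ s)
    (s : ℕ → S) (a : ℕ → A) :
    ∑' t : ℕ, γ ^ t * R' (s t) (a t) (s (t + 1))
      = (∑' t : ℕ, γ ^ t * R (s t) (a t) (s (t + 1))) - Φ (s 0) := by
  obtain ⟨MR, hMR⟩ := hRb
  obtain ⟨MΦ, hMΦ⟩ := hΦb
  have hγ : |γ| < 1 := abs_lt.2 ⟨by linarith, hγ1⟩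
  simp only [hR']
  exact tsum_pow_mul_shaped (summable_pow_mul_of_abs_le hγ fun t ↦ hMR _ _ _)
    (summable_pow_mul_of_abs_le hγ fun t ↦ hMΦ (s t))
end
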